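/- There exist independent uniform random variables on a two-element set α_w, α_x, α_y, α_z, β such that defining A_w = (α_w, β), A_x = (α_x, β'), A_y = (α_y, β), A_z = (α_z, β) appropriately (with the distribution of (A_x, A_y, A_z) constructed analogously using its own common bit, the pair (A_w, A_x) taken as independent, and the marginal of (A_y, A_z) agreeing in both triple distributions), one obtains a marginal model on the scenario generated by {w,y,z}, {x,y,z}, {w,x} whose entropies (in bits) are: H of each singleton = 2, H(A_w A_x) = 4, H of every other pair = 3, H(A_w A_y A_z) = H(A_x A_y A_z) = 4. -/

import Mathlib

/-- Shannon entropy (in bits) of a probability distribution `p` on a finite type. -/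
noncomputable def Hd {α : Type*} [Fintype α] (p : α → ℝ) : ℝ :=
  (∑ a : α, Real.negMulLog (p a)) / Real.log 2

/-- Each variable takes values in a four-element set (two bits). -/
abbrev V : Type := Fin 2 × Fin 2

/-!
Write each variable as a pair of bits `(α, β)`. Let `A_w, A_y, A_z` be uniform subject only to
their second bits agreeing, take `(A_x, A_y, A_z)` with the same law, and let `A_w, A_x` be
independent and uniform. Every distribution in the model, and every marginal of one, is then
uniform on a set of size `2 ^ n`, whose entropy is `n` bits: the singletons have `2 ^ 2` values,
a pair with a shared bit `2 ^ 3`, and the triples and `(A_w, A_x)` have `2 ^ 4`.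
-/

open Finset

section Uniform

variable {α : Type*} [DecidableEq α]

noncomputable def uniformOn (s : Finset α) (a : α) : ℝ := if a ∈ s then (#s : ℝ)⁻¹ else 0

lemma uniformOn_nonneg (s : Finset α) (a : α) : 0 ≤ uniformOn s a := by
  unfold uniformOn; split_ifs <;> positivity

lemma negMulLog_uniformOn (s : Finset α) (a : α) :
    Real.negMulLog (uniformOn s a) = if a ∈ s then (#s : ℝ)⁻¹ * Real.log #s else 0 := by
  unfold uniformOn; split_ifs <;> simp [Real.negMulLog]

variable [Fintype α]

lemma sum_uniformOn {s : Finset α} (hs : s.Nonempty) : ∑ a, uniformOn s a = 1 := by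
  simp [uniformOn, sum_ite_mem, hs.card_pos.ne']

lemma Hd_uniformOn (s : Finset α) : Hd (uniformOn s) = Real.logb 2 #s := by
  rcases s.eq_empty_or_nonempty with rfl | hs
  · simp [Hd, uniformOn]
  simp only [Hd, negMulLog_uniformOn, sum_ite_mem, univ_inter, sum_const, nsmul_eq_mul,
    mul_inv_cancel_left₀ ((Nat.cast_ne_zero (R := ℝ)).2 hs.card_pos.ne'), Real.logb]

lemma Hd_uniformOn_of_card_eq_two_pow {s : Finset α} {n : ℕ} (h : #s = 2 ^ n) :
    Hd (uniformOn s) = n := by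
  rw [Hd_uniformOn, h, Nat.cast_pow, Nat.cast_ofNat, Real.logb_pow,
    Real.logb_self_eq_one one_lt_two, mul_one]

variable {β : Type*} [DecidableEq β] [Fintype β]

lemma sum_uniformOn_univ_prod_left [Nonempty β] (a : α) :
    ∑ b : β, uniformOn (univ : Finset (α × β)) (a, b) = uniformOn univ a := by
  simp only [uniformOn, mem_univ, if_true, sum_const, card_univ, Fintype.card_prod, nsmul_eq_mul,
    Nat.cast_mul]
  field_simp

lemma sum_uniformOn_univ_prod_right [Nonempty α] (b : β) :
    ∑ a : α, uniformOn (univ : Finset (α × β)) (a, b) = uniformOn univ b := by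
  simp only [uniformOn, mem_univ, if_true, sum_const, card_univ, Fintype.card_prod, nsmul_eq_mul,
    Nat.cast_mul]
  field_simp

end Uniform

def commonBitTriples : Finset (V × V × V) := {x | x.1.2 = x.2.1.2 ∧ x.2.1.2 = x.2.2.2}

def commonBitPairs : Finset (V × V) := {x | x.1.2 = x.2.2}

lemma mem_commonBitTriples {x : V × V × V} :
    x ∈ commonBitTriples ↔ x.1.2 = x.2.1.2 ∧ x.2.1.2 = x.2.2.2 := by
  simp [commonBitTriples]

lemma mem_commonBitPairs {x : V × V} : x ∈ commonBitPairs ↔ x.1.2 = x.2.2 := by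
  simp [commonBitPairs]

lemma card_univ_V : #(univ : Finset V) = 2 ^ 2 := rfl

lemma card_univ_V_prod_V : #(univ : Finset (V × V)) = 2 ^ 4 := rfl

lemma card_commonBitTriples : #commonBitTriples = 2 ^ 4 := by decide

lemma card_commonBitPairs : #commonBitPairs = 2 ^ 3 := by decide

lemma commonBitTriples_nonempty : commonBitTriples.Nonempty :=
  card_pos.1 (by rw [card_commonBitTriples]; norm_num)

noncomputable def commonBitLaw : V × V × V → ℝ := uniformOn commonBitTriples

lemma commonBitLaw_apply (a b c : V) :
    commonBitLaw (a, b, c) = if a.2 = b.2 ∧ b.2 = c.2 then (16 : ℝ)⁻¹ else 0 := by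
  simp only [commonBitLaw, uniformOn, card_commonBitTriples, mem_commonBitTriples]
  norm_num

lemma commonBitLaw_marginal_fst :
    (fun a : V => ∑ bc : V × V, commonBitLaw (a, bc.1, bc.2)) = uniformOn univ := by
  funext a
  simp only [commonBitLaw_apply, uniformOn, mem_univ, if_true, card_univ_V, Fintype.sum_prod_type]
  fin_cases a <;> simp [Fin.sum_univ_two] <;> norm_num

lemma commonBitLaw_marginal_snd :
    (fun b : V => ∑ ac : V × V, commonBitLaw (ac.1, b, ac.2)) = uniformOn univ := by
  funext b
  simp only [commonBitLaw_apply, uniformOn, mem_univ, if_true, card_univ_V, Fintype.sum_prod_type]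
  fin_cases b <;> simp [Fin.sum_univ_two] <;> norm_num

lemma commonBitLaw_marginal_thd :
    (fun c : V => ∑ ab : V × V, commonBitLaw (ab.1, ab.2, c)) = uniformOn univ := by
  funext c
  simp only [commonBitLaw_apply, uniformOn, mem_univ, if_true, card_univ_V, Fintype.sum_prod_type]
  fin_cases c <;> simp [Fin.sum_univ_two] <;> norm_num

lemma commonBitLaw_marginal_fst_snd :
    (fun ab : V × V => ∑ c : V, commonBitLaw (ab.1, ab.2, c)) = uniformOn commonBitPairs := by
  funext ⟨a, b⟩
  simp only [commonBitLaw_apply, uniformOn, card_commonBitPairs, mem_commonBitPairs,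
    Fintype.sum_prod_type]
  fin_cases a <;> fin_cases b <;> simp <;> norm_num

lemma commonBitLaw_marginal_fst_thd :
    (fun ac : V × V => ∑ b : V, commonBitLaw (ac.1, b, ac.2)) = uniformOn commonBitPairs := by
  funext ⟨a, c⟩
  simp only [commonBitLaw_apply, uniformOn, card_commonBitPairs, mem_commonBitPairs,
    Fintype.sum_prod_type]
  fin_cases a <;> fin_cases c <;> simp [Fin.sum_univ_two] <;> norm_num

lemma commonBitLaw_marginal_snd_thd :
    (fun bc : V × V => ∑ a : V, commonBitLaw (a, bc.1, bc.2)) = uniformOn commonBitPairs := by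
  funext ⟨b, c⟩
  simp only [commonBitLaw_apply, uniformOn, card_commonBitPairs, mem_commonBitPairs,
    Fintype.sum_prod_type]
  fin_cases b <;> fin_cases c <;> simp <;> norm_num

/-- There is a marginal model on the scenario generated by {w,y,z}, {x,y,z}, {w,x}
realizing the partial polymatroid f^{ZY}: all singleton entropies 2, H(A_w A_x) = 4,
all other pair entropies 3, and triple entropies H(A_w A_y A_z) = H(A_x A_y A_z) = 4. -/
theorem zhang_yeung_marginal_model_exists :
    ∃ (P1 P2 : V × V × V → ℝ) (P3 : V × V → ℝ),
      -- P1 : distribution of (A_w, A_y, A_z); P2 : of (A_x, A_y, A_z); P3 : of (A_w, A_x)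
      (∀ x, 0 ≤ P1 x) ∧ (∑ x, P1 x = 1) ∧
      (∀ x, 0 ≤ P2 x) ∧ (∑ x, P2 x = 1) ∧
      (∀ x, 0 ≤ P3 x) ∧ (∑ x, P3 x = 1) ∧
      -- compatibility: the (y,z) marginals of P1 and P2 agree
      (∀ b c : V, (∑ a : V, P1 (a, b, c)) = ∑ a : V, P2 (a, b, c)) ∧
      -- compatibility: the w marginals of P1 and P3 agree
      (∀ a : V, (∑ bc : V × V, P1 (a, bc.1, bc.2)) = ∑ b : V, P3 (a, b)) ∧
      -- compatibility: the x marginals of P2 and P3 agree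
      (∀ a : V, (∑ bc : V × V, P2 (a, bc.1, bc.2)) = ∑ b : V, P3 (b, a)) ∧
      -- singleton entropies: 2 bits each
      Hd (fun a : V => ∑ bc : V × V, P1 (a, bc.1, bc.2)) = 2 ∧  -- H(A_w)
      Hd (fun b : V => ∑ ac : V × V, P1 (ac.1, b, ac.2)) = 2 ∧  -- H(A_y)
      Hd (fun c : V => ∑ ab : V × V, P1 (ab.1, ab.2, c)) = 2 ∧  -- H(A_z)
      Hd (fun a : V => ∑ bc : V × V, P2 (a, bc.1, bc.2)) = 2 ∧  -- H(A_x)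
      -- pair entropies
      Hd P3 = 4 ∧                                               -- H(A_w A_x)
      Hd (fun wy : V × V => ∑ c : V, P1 (wy.1, wy.2, c)) = 3 ∧  -- H(A_w A_y)
      Hd (fun wz : V × V => ∑ b : V, P1 (wz.1, b, wz.2)) = 3 ∧  -- H(A_w A_z)
      Hd (fun yz : V × V => ∑ a : V, P1 (a, yz.1, yz.2)) = 3 ∧  -- H(A_y A_z)
      Hd (fun xy : V × V => ∑ c : V, P2 (xy.1, xy.2, c)) = 3 ∧  -- H(A_x A_y)
      Hd (fun xz : V × V => ∑ b : V, P2 (xz.1, b, xz.2)) = 3 ∧  -- H(A_x A_z)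
      -- triple entropies
      Hd P1 = 4 ∧ Hd P2 = 4 := by
  refine ⟨commonBitLaw, commonBitLaw, uniformOn univ,
    uniformOn_nonneg _, sum_uniformOn commonBitTriples_nonempty,
    uniformOn_nonneg _, sum_uniformOn commonBitTriples_nonempty,
    uniformOn_nonneg _, sum_uniformOn univ_nonempty, fun _ _ => rfl,
    fun a => (congrFun commonBitLaw_marginal_fst a).trans (sum_uniformOn_univ_prod_left a).symm,
    fun a => (congrFun commonBitLaw_marginal_fst a).trans (sum_uniformOn_univ_prod_right a).symm,
    ?_⟩
  rw [commonBitLaw_marginal_fst, commonBitLaw_marginal_snd, commonBitLaw_marginal_thd,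
    commonBitLaw_marginal_fst_snd, commonBitLaw_marginal_fst_thd, commonBitLaw_marginal_snd_thd,
    commonBitLaw, Hd_uniformOn_of_card_eq_two_pow card_univ_V,
    Hd_uniformOn_of_card_eq_two_pow card_univ_V_prod_V,
    Hd_uniformOn_of_card_eq_two_pow card_commonBitPairs,
    Hd_uniformOn_of_card_eq_two_pow card_commonBitTriples]
  norm_num
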